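/- arXiv:2412.08488 — 2 statements merged into one kernel-verified Lean document; each statement's English description precedes it below -/
import Mathlib

section
/- Let d ≥ 3, α ∈ (0,d), q ∈ ((2d-α)/d, (2d-α+2)/d), and A, B, C > 0. Define f(a,ρ) = A - B·a^((2q-d(q-2)-α)/2)·ρ^((d(q-2)+α-2)/2) - C·ρ^((2d-α)/(d-2)-1). Then there exists a constant K > 0 (explicit in terms of d, q, α, B, C) such that max_{ρ>0} f(a,ρ) = A - K·a^((d+2-α)/d) for all a > 0. Consequently, setting a₀ = (A/K)^(d/(d+2-α)), one has max_{ρ>0} f(a,ρ) > 0 if a < a₀, = 0 if a = a₀, and < 0 if a > a₀. -/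
open Real Set

/-- The function `f(a,ρ)` from Lemma 2.1 of the paper. -/
noncomputable def fFun (d : ℕ) (α q A B C a ρ : ℝ) : ℝ :=
  A - B * a ^ ((2 * q - d * (q - 2) - α) / 2) * ρ ^ ((d * (q - 2) + α - 2) / 2)
    - C * ρ ^ ((2 * d - α) / (d - 2) - 1)

/-!
Writing `f(a,ρ) = A - (P ρ^t + C ρ^u)` with `P = B a^s`, `t < 0 < u`, the weighted AM-GM
inequality with weights `w₁ = u/(u-t)`, `w₂ = -t/(u-t)` (chosen so that `t w₁ + u w₂ = 0`)
bounds `P ρ^t + C ρ^u` below by `(P/w₁)^w₁ (C/w₂)^w₂`, independently of `ρ`, with equality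
where the two weighted terms agree. Since `s w₁ = (d+2-α)/d`, this minimum is `K a^((d+2-α)/d)`,
and the sign of `A - K a^((d+2-α)/d)` is read off by comparing `a` with `(A/K)^(d/(d+2-α))`.
-/

section WeightedAMGM

variable {P C t u w₁ w₂ ρ : ℝ}

lemma weighted_rpow_prod_eq (hP : 0 ≤ P) (hC : 0 ≤ C) (hw₁ : 0 ≤ w₁) (hw₂ : 0 ≤ w₂)
    (hρ : 0 < ρ) (hbal : t * w₁ + u * w₂ = 0) :
    (P * ρ ^ t / w₁) ^ w₁ * (C * ρ ^ u / w₂) ^ w₂ = (P / w₁) ^ w₁ * (C / w₂) ^ w₂ := by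
  have hρpow : ρ ^ (t * w₁) * ρ ^ (u * w₂) = 1 := by
    rw [← rpow_add hρ, hbal, rpow_zero]
  rw [mul_div_right_comm P, mul_div_right_comm C, mul_rpow (by positivity) (by positivity),
    mul_rpow (by positivity) (by positivity), ← rpow_mul hρ.le, ← rpow_mul hρ.le,
    mul_mul_mul_comm, hρpow, mul_one]

lemma weighted_rpow_prod_le_mul_rpow_add_mul_rpow (hP : 0 ≤ P) (hC : 0 ≤ C) (hw₁ : 0 < w₁)
    (hw₂ : 0 < w₂) (hw : w₁ + w₂ = 1) (hbal : t * w₁ + u * w₂ = 0) (hρ : 0 < ρ) :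
    (P / w₁) ^ w₁ * (C / w₂) ^ w₂ ≤ P * ρ ^ t + C * ρ ^ u := by
  calc (P / w₁) ^ w₁ * (C / w₂) ^ w₂
      = (P * ρ ^ t / w₁) ^ w₁ * (C * ρ ^ u / w₂) ^ w₂ :=
        (weighted_rpow_prod_eq hP hC hw₁.le hw₂.le hρ hbal).symm
    _ ≤ w₁ * (P * ρ ^ t / w₁) + w₂ * (C * ρ ^ u / w₂) :=
        geom_mean_le_arith_mean2_weighted hw₁.le hw₂.le (by positivity) (by positivity) hw
    _ = P * ρ ^ t + C * ρ ^ u := by field_simp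

lemma exists_mul_rpow_add_mul_rpow_eq (hP : 0 < P) (hC : 0 < C) (hw₁ : 0 < w₁)
    (hw₂ : 0 < w₂) (hw : w₁ + w₂ = 1) (hbal : t * w₁ + u * w₂ = 0) (htu : t ≠ u) :
    ∃ ρ > 0, P * ρ ^ t + C * ρ ^ u = (P / w₁) ^ w₁ * (C / w₂) ^ w₂ := by
  have hz : 0 < P * w₂ / (C * w₁) := by positivity
  obtain ⟨ρ, hρ, hρpow⟩ : ∃ ρ > 0, ρ ^ (u - t) = P * w₂ / (C * w₁) :=
    ⟨_, by positivity, rpow_inv_rpow hz.le (sub_ne_zero.2 htu.symm)⟩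
  -- at this `ρ` the two terms weighted in the AM-GM inequality agree
  have hterms : C * ρ ^ u / w₂ = P * ρ ^ t / w₁ := by
    rw [show u = t + (u - t) by ring, rpow_add hρ, hρpow]
    field_simp
  have hx : 0 < P * ρ ^ t / w₁ := by positivity
  refine ⟨ρ, hρ, ?_⟩
  calc P * ρ ^ t + C * ρ ^ u = w₁ * (P * ρ ^ t / w₁) + w₂ * (C * ρ ^ u / w₂) := by field_simp
    _ = P * ρ ^ t / w₁ := by rw [hterms, ← add_mul, hw, one_mul]
    _ = (P * ρ ^ t / w₁) ^ w₁ * (P * ρ ^ t / w₁) ^ w₂ := by rw [← rpow_add hx, hw, rpow_one]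
    _ = (P / w₁) ^ w₁ * (C / w₂) ^ w₂ := by
        nth_rw 2 [← hterms]
        rw [weighted_rpow_prod_eq hP.le hC.le hw₁.le hw₂.le hρ hbal]

end WeightedAMGM

noncomputable def rpowSumMin (P C t u : ℝ) : ℝ :=
  (P / (u / (u - t))) ^ (u / (u - t)) * (C / (-t / (u - t))) ^ (-t / (u - t))

section RpowSumMin

variable {P C t u : ℝ}

lemma isLeast_rpowSumMin (hP : 0 < P) (hC : 0 < C) (ht : t < 0) (hu : 0 < u) :
    IsLeast ((fun ρ => P * ρ ^ t + C * ρ ^ u) '' Ioi 0) (rpowSumMin P C t u) := by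
  have hut : 0 < u - t := by linarith
  have hw₁ : 0 < u / (u - t) := by positivity
  have hw₂ : 0 < -t / (u - t) := div_pos (by linarith) hut
  have hw : u / (u - t) + -t / (u - t) = 1 := by field_simp; ring
  have hbal : t * (u / (u - t)) + u * (-t / (u - t)) = 0 := by field_simp; ring
  refine ⟨exists_mul_rpow_add_mul_rpow_eq hP hC hw₁ hw₂ hw hbal (by linarith), ?_⟩
  rintro _ ⟨ρ, hρ, rfl⟩
  exact weighted_rpow_prod_le_mul_rpow_add_mul_rpow hP.le hC.le hw₁ hw₂ hw hbal hρ

lemma rpowSumMin_pos (hP : 0 < P) (hC : 0 < C) (ht : t < 0) (hu : 0 < u) :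
    0 < rpowSumMin P C t u := by
  have hut : 0 < u - t := by linarith
  have hw₂ : 0 < -t / (u - t) := div_pos (by linarith) hut
  unfold rpowSumMin
  positivity

lemma rpowSumMin_mul_rpow {a s : ℝ} (hP : 0 ≤ P) (ha : 0 ≤ a) (ht : t ≤ 0) (hu : 0 ≤ u) :
    rpowSumMin (P * a ^ s) C t u = rpowSumMin P C t u * a ^ (s * (u / (u - t))) := by
  have hw₁ : 0 ≤ u / (u - t) := div_nonneg hu (by linarith)
  unfold rpowSumMin
  rw [mul_div_right_comm, mul_rpow (by positivity) (by positivity), ← rpow_mul ha]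
  ring

end RpowSumMin

section Threshold

variable {A K a e : ℝ}

lemma sub_mul_rpow_pos_iff (hA : 0 ≤ A) (hK : 0 < K) (ha : 0 ≤ a) (he : 0 < e) :
    0 < A - K * a ^ e ↔ a < (A / K) ^ e⁻¹ := by
  rw [lt_rpow_inv_iff_of_pos ha (by positivity) he, lt_div_iff₀' hK, sub_pos]

lemma sub_mul_rpow_neg_iff (hA : 0 ≤ A) (hK : 0 < K) (ha : 0 ≤ a) (he : 0 < e) :
    A - K * a ^ e < 0 ↔ (A / K) ^ e⁻¹ < a := by
  rw [rpow_inv_lt_iff_of_pos (by positivity) ha he, div_lt_iff₀' hK, sub_neg]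

lemma sub_mul_rpow_inv_eq_zero (hA : 0 ≤ A) (hK : 0 < K) (he : e ≠ 0) :
    A - K * ((A / K) ^ e⁻¹) ^ e = 0 := by
  rw [rpow_inv_rpow (by positivity) he, mul_div_cancel₀ _ hK.ne', sub_self]

end Threshold

section Exponents

variable {d : ℕ} {α q : ℝ}

lemma fFun_rho_exponent_neg (hd : 0 < d) (hq' : q < (2 * d - α + 2) / d) :
    (d * (q - 2) + α - 2) / 2 < 0 := by
  rw [lt_div_iff₀ (by exact_mod_cast hd)] at hq'
  linarith

lemma fFun_rho_exponent_pos (hd : 3 ≤ d) (hα' : α < d) :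
    0 < (2 * d - α) / (d - 2) - 1 := by
  have hd2 : (0 : ℝ) < d - 2 := by
    have : (3 : ℝ) ≤ d := by exact_mod_cast hd
    linarith
  rw [sub_pos, lt_div_iff₀ hd2]
  linarith

/-- `s w₁ = (d+2-α)/d` for the exponents `s, t, u` of `fFun` and `w₁ = u/(u-t)`. -/
lemma fFun_a_exponent_mul_weight (hd : 3 ≤ d) (hα' : α < d) (hq' : q < (2 * d - α + 2) / d) :
    (2 * q - d * (q - 2) - α) / 2 *
        (((2 * d - α) / (d - 2) - 1) /
          (((2 * d - α) / (d - 2) - 1) - (d * (q - 2) + α - 2) / 2)) =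
      (d + 2 - α) / d := by
  have hut : ((2 * d - α) / (d - 2) - 1) - (d * (q - 2) + α - 2) / 2 ≠ 0 := by
    linarith [fFun_rho_exponent_neg (by omega) hq', fFun_rho_exponent_pos hd hα']
  have hd2 : (d : ℝ) - 2 ≠ 0 := by
    have : (3 : ℝ) ≤ d := by exact_mod_cast hd
    linarith
  have hd0 : (d : ℝ) ≠ 0 := by positivity
  rw [mul_div_assoc', div_eq_div_iff hut hd0]
  field_simp
  ring

end Exponents

theorem stmt1_general (d : ℕ) (hd : 3 ≤ d) (α q A B C : ℝ)
    (hα' : α < d)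
    (hq' : q < (2 * d - α + 2) / d)
    (hA : 0 < A) (hB : 0 < B) (hC : 0 < C) :
    ∃ K > (0 : ℝ),
      (∀ a > (0 : ℝ),
        IsGreatest (fFun d α q A B C a '' Ioi (0 : ℝ))
          (A - K * a ^ ((d + 2 - α) / d))) ∧
      (∀ a > (0 : ℝ),
        (a < (A / K) ^ ((d : ℝ) / (d + 2 - α)) → 0 < A - K * a ^ ((d + 2 - α) / d)) ∧
        (a = (A / K) ^ ((d : ℝ) / (d + 2 - α)) → A - K * a ^ ((d + 2 - α) / d) = 0) ∧
        ((A / K) ^ ((d : ℝ) / (d + 2 - α)) < a → A - K * a ^ ((d + 2 - α) / d) < 0)) := by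
  have ht := fFun_rho_exponent_neg (by omega) hq'
  have hu := fFun_rho_exponent_pos hd hα'
  have he : (0 : ℝ) < (d + 2 - α) / d := div_pos (by linarith) (by positivity)
  refine ⟨rpowSumMin B C _ _, rpowSumMin_pos hB hC ht hu, fun a ha => ?_, fun a ha => ?_⟩
  · rw [← fFun_a_exponent_mul_weight hd hα' hq', ← rpowSumMin_mul_rpow hB.le ha.le ht.le hu.le]
    have hmin := isLeast_rpowSumMin
      (by positivity : 0 < B * a ^ ((2 * q - d * (q - 2) - α) / 2)) hC ht hu
    have hf : fFun d α q A B C a = (fun y => A - y) ∘ fun ρ =>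
        B * a ^ ((2 * q - d * (q - 2) - α) / 2) * ρ ^ ((d * (q - 2) + α - 2) / 2) +
          C * ρ ^ ((2 * d - α) / (d - 2) - 1) := by
      funext ρ
      simp only [fFun, Function.comp_apply]
      ring
    rw [hf, image_comp]
    exact antitone_const_tsub.map_isLeast hmin
  · have hK := rpowSumMin_pos hB hC ht hu
    rw [← inv_div (d + 2 - α : ℝ)]
    exact ⟨(sub_mul_rpow_pos_iff hA.le hK ha.le he).2,
      fun h => h ▸ sub_mul_rpow_inv_eq_zero hA.le hK he.ne',
      (sub_mul_rpow_neg_iff hA.le hK ha.le he).2⟩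

/-- there is a constant `K > 0` with
`max_{ρ>0} f(a,ρ) = A - K a^((d+2-α)/d)` for all `a > 0`; with
`a₀ = (A/K)^(d/(d+2-α))` the maximum is `> 0` for `a < a₀`, `= 0` at `a = a₀`,
and `< 0` for `a > a₀`. -/
theorem stmt1 (d : ℕ) (hd : 3 ≤ d) (α q A B C : ℝ)
    (hα : 0 < α) (hα' : α < d)
    (hq : (2 * d - α) / d < q) (hq' : q < (2 * d - α + 2) / d)
    (hA : 0 < A) (hB : 0 < B) (hC : 0 < C) :
    ∃ K > (0 : ℝ),
      (∀ a > (0 : ℝ),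
        IsGreatest (fFun d α q A B C a '' Ioi (0 : ℝ))
          (A - K * a ^ ((d + 2 - α) / d))) ∧
      (∀ a > (0 : ℝ),
        (a < (A / K) ^ ((d : ℝ) / (d + 2 - α)) → 0 < A - K * a ^ ((d + 2 - α) / d)) ∧
        (a = (A / K) ^ ((d : ℝ) / (d + 2 - α)) → A - K * a ^ ((d + 2 - α) / d) = 0) ∧
        ((A / K) ^ ((d : ℝ) / (d + 2 - α)) < a → A - K * a ^ ((d + 2 - α) / d) < 0)) :=
  stmt1_general d hd α q A B C hα' hq' hA hB hC
end

section
/- Let d ≥ 3, α ∈ (0,d), q ∈ ((2d-α)/d, (2d-α+2)/d), and A, B, C > 0; define f(a,ρ) = A - B·a^((2q-d(q-2)-α)/2)·ρ^((d(q-2)+α-2)/2) - C·ρ^((2d-α)/(d-2)-1). Suppose (a₁, ρ₁) ∈ (0,∞)² satisfies f(a₁, ρ₁) ≥ 0. Then for any a₂ ∈ (0, a₁] and any ρ₂ ∈ [(a₂/a₁)·ρ₁, ρ₁], one has f(a₂, ρ₂) ≥ 0. -/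
open Real Set

/-- Lemma 2.2: if `f(a₁,ρ₁) ≥ 0` then `f(a₂,ρ₂) ≥ 0` for all
`a₂ ∈ (0,a₁]` and `ρ₂ ∈ [(a₂/a₁)ρ₁, ρ₁]`. -/
theorem stmt2 (d : ℕ) (hd : 3 ≤ d) (α q A B C : ℝ)
    (hα : 0 < α) (hα' : α < d)
    (hq : (2 * d - α) / d < q) (hq' : q < (2 * d - α + 2) / d)
    (hA : 0 < A) (hB : 0 < B) (hC : 0 < C)
    (a₁ ρ₁ : ℝ) (ha₁ : 0 < a₁) (hρ₁ : 0 < ρ₁)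
    (hf : 0 ≤ fFun d α q A B C a₁ ρ₁)
    (a₂ : ℝ) (ha₂ : a₂ ∈ Ioc (0 : ℝ) a₁)
    (ρ₂ : ℝ) (hρ₂ : ρ₂ ∈ Icc (a₂ / a₁ * ρ₁) ρ₁) :
    0 ≤ fFun d α q A B C a₂ ρ₂ := by
  obtain ⟨ha₂0, ha₂1⟩ := ha₂
  obtain ⟨hρ₂l, hρ₂u⟩ := hρ₂
  have hd3 : (3:ℝ) ≤ (d:ℝ) := by exact_mod_cast hd
  have hd0 : (0:ℝ) < d := by linarith
  simp only [fFun] at hf ⊢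
  set p : ℝ := (2 * q - d * (q - 2) - α) / 2 with hp
  set r : ℝ := (d * (q - 2) + α - 2) / 2 with hrdef
  set s : ℝ := (2 * d - α) / (d - 2) - 1 with hs
  have hq1 : 1 < q := by
    have := (div_lt_iff₀ hd0).mp hq
    nlinarith
  have hr : r ≤ 0 := by
    have := (lt_div_iff₀ hd0).mp hq'
    rw [hrdef]; nlinarith
  have hpr : p + r = q - 1 := by rw [hp, hrdef]; ring
  have hs0 : 0 ≤ s := by
    rw [hs]
    have h2 : (0:ℝ) < (d:ℝ) - 2 := by linarith
    rw [sub_nonneg, le_div_iff₀ h2]; linarith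
  have hρ₂0 : 0 < ρ₂ := lt_of_lt_of_le (by positivity) hρ₂l
  have hB1 : a₂ ^ p * ρ₂ ^ r ≤ a₁ ^ p * ρ₁ ^ r := by
    have step1 : ρ₂ ^ r ≤ (a₂ / a₁ * ρ₁) ^ r :=
      Real.rpow_le_rpow_of_nonpos (by positivity) hρ₂l hr
    have step2 : (a₂ / a₁ * ρ₁) ^ r = a₂ ^ r * a₁ ^ (-r) * ρ₁ ^ r := by
      rw [Real.mul_rpow (by positivity) hρ₁.le, Real.div_rpow ha₂0.le ha₁.le,
        Real.rpow_neg ha₁.le, div_eq_mul_inv]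
    have step3 : a₂ ^ p * (a₂ ^ r * a₁ ^ (-r) * ρ₁ ^ r)
        = a₂ ^ (p + r) * (a₁ ^ (-r) * ρ₁ ^ r) := by
      rw [Real.rpow_add ha₂0]; ring
    have step4 : a₂ ^ (p + r) ≤ a₁ ^ (p + r) := by
      apply Real.rpow_le_rpow ha₂0.le ha₂1
      rw [hpr]; linarith
    calc a₂ ^ p * ρ₂ ^ r ≤ a₂ ^ p * (a₂ ^ r * a₁ ^ (-r) * ρ₁ ^ r) := by
          rw [← step2]; exact mul_le_mul_of_nonneg_left step1 (by positivity)
      _ = a₂ ^ (p + r) * (a₁ ^ (-r) * ρ₁ ^ r) := step3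
      _ ≤ a₁ ^ (p + r) * (a₁ ^ (-r) * ρ₁ ^ r) :=
          mul_le_mul_of_nonneg_right step4 (by positivity)
      _ = a₁ ^ p * ρ₁ ^ r := by
          rw [Real.rpow_add ha₁, Real.rpow_neg ha₁.le]
          field_simp
  have hC1 : ρ₂ ^ s ≤ ρ₁ ^ s := Real.rpow_le_rpow hρ₂0.le hρ₂u hs0
  have h1 : B * a₂ ^ p * ρ₂ ^ r ≤ B * a₁ ^ p * ρ₁ ^ r := by
    rw [mul_assoc, mul_assoc]; exact mul_le_mul_of_nonneg_left hB1 hB.le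
  have h2 : C * ρ₂ ^ s ≤ C * ρ₁ ^ s := mul_le_mul_of_nonneg_left hC1 hC.le
  linarith
end
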